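/- Let A be a Banach algebra and I a closed two-sided ideal of A. If the quotient Banach algebra A/I is approximately cyclic amenable, then I has the approximate trace extension property. -/

import Mathlib

open Filter Topology

noncomputable section

universe u v

variable {A : Type u} [NonUnitalNormedRing A] [NormedSpace ℂ A]
  [IsScalarTower ℂ A A] [SMulCommClass ℂ A A]

/-- The left module action of `A` on its dual `A*`: `(a · f) b = f (b * a)`. -/
def lAct (a : A) (f : A →L[ℂ] ℂ) : A →L[ℂ] ℂ :=
  f.comp ((ContinuousLinearMap.mul ℂ A).flip a)

/-- The right module action of `A` on its dual `A*`: `(f · a) b = f (a * b)`. -/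
def rAct (f : A →L[ℂ] ℂ) (a : A) : A →L[ℂ] ℂ :=
  f.comp (ContinuousLinearMap.mul ℂ A a)

/-- A bounded linear `D : A → A*` is a derivation if `D (a * b) = D a · b + a · D b`. -/
def IsDerivation (D : A →L[ℂ] (A →L[ℂ] ℂ)) : Prop :=
  ∀ a b : A, D (a * b) = rAct (D a) b + lAct a (D b)

/-- A derivation `D : A → A*` is cyclic if `⟨D a, b⟩ + ⟨D b, a⟩ = 0` for all `a, b`. -/
def IsCyclicDeriv (D : A →L[ℂ] (A →L[ℂ] ℂ)) : Prop :=
  ∀ a b : A, D a b + D b a = 0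

/-- `D : A → A*` is approximately inner if there is a net `(f i)` in `A*` with
`D a = lim_i (a · f i - f i · a)` in norm, for every `a ∈ A`. -/
def IsApproxInner {A : Type u} [NonUnitalNormedRing A] [NormedSpace ℂ A]
    [IsScalarTower ℂ A A] [SMulCommClass ℂ A A] (D : A →L[ℂ] (A →L[ℂ] ℂ)) : Prop :=
  ∃ (ι : Type u) (l : Filter ι) (f : ι → (A →L[ℂ] ℂ)), l.NeBot ∧
    ∀ a : A, Tendsto (fun i => lAct a (f i) - rAct (f i) a) l (𝓝 (D a))

/-- `D : A → A*` is inner if `D a = a · f - f · a` for some fixed `f ∈ A*`. -/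
def IsInner (D : A →L[ℂ] (A →L[ℂ] ℂ)) : Prop :=
  ∃ f : A →L[ℂ] ℂ, ∀ a : A, D a = lAct a f - rAct f a

/-- A Banach algebra is approximately cyclic amenable if every cyclic bounded
derivation `D : A → A*` is approximately inner. -/
def ApproxCyclicAmenable (A : Type u) [NonUnitalNormedRing A] [NormedSpace ℂ A]
    [IsScalarTower ℂ A A] [SMulCommClass ℂ A A] : Prop :=
  ∀ D : A →L[ℂ] (A →L[ℂ] ℂ), IsDerivation D → IsCyclicDeriv D → IsApproxInner D

/-- A Banach algebra is cyclic amenable if every cyclic bounded derivation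
`D : A → A*` is inner. -/
def CyclicAmenable (A : Type u) [NonUnitalNormedRing A] [NormedSpace ℂ A]
    [IsScalarTower ℂ A A] [SMulCommClass ℂ A A] : Prop :=
  ∀ D : A →L[ℂ] (A →L[ℂ] ℂ), IsDerivation D → IsCyclicDeriv D → IsInner D

/-- A closed two-sided ideal `I` of `A` has the approximate trace extension property if every
`f ∈ I*` with `a · f = f · a` for all `a ∈ A` admits a net `(g i)` in `A*` with
`g i |_I = f` for all `i` and `a · g i - g i · a → 0` in norm for every `a ∈ A`. -/
def HasApproxTraceExt {A : Type u} [NonUnitalNormedRing A] [NormedSpace ℂ A]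
    [IsScalarTower ℂ A A] [SMulCommClass ℂ A A] (I : Submodule ℂ A)
    (hr : ∀ (a : A), ∀ x ∈ I, x * a ∈ I) (hl : ∀ (a : A), ∀ x ∈ I, a * x ∈ I) : Prop :=
  ∀ f : ↥I →L[ℂ] ℂ,
    (∀ (a : A) (x : ↥I), f ⟨a * (x : A), hl a x x.2⟩ = f ⟨(x : A) * a, hr a x x.2⟩) →
    ∃ (ι : Type u) (l : Filter ι) (g : ι → (A →L[ℂ] ℂ)), l.NeBot ∧
      (∀ i, ∀ x : ↥I, g i (x : A) = f x) ∧
      (∀ a : A, Tendsto (fun i => lAct a (g i) - rAct (g i) a) l (𝓝 0))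

/-!
Extend the `A`-central functional `f ∈ I*` to `F ∈ A*` by Hahn–Banach. The inner derivation
`a ↦ a · F - F · a`, i.e. the form `(a, b) ↦ F (b a) - F (a b)`, is cyclic, and since `f` is
central it vanishes as soon as `a` or `b` lies in `I`. By the open mapping theorem it therefore
descends to a bounded cyclic derivation `D` of `A/I`. If `D = lim (q · h i - h i · q)`, then
`F - h i ∘ π` still restricts to `f` on `I`, and its commutator with `a` is
`(D (π a) - (π a · h i - h i · π a)) ∘ π → 0`.
-/

namespace ContinuousLinearMap

variable {𝕜 E F G : Type*} [RCLike 𝕜]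
  [NormedAddCommGroup E] [NormedSpace 𝕜 E] [CompleteSpace E]
  [NormedAddCommGroup F] [NormedSpace 𝕜 F] [CompleteSpace F]
  [NormedAddCommGroup G] [NormedSpace 𝕜 G]

theorem exists_comp_eq_of_surjective (π : E →L[𝕜] F) (hπ : Function.Surjective π)
    (g : E →L[𝕜] G) (hg : ∀ x, π x = 0 → g x = 0) : ∃ g' : F →L[𝕜] G, g'.comp π = g := by
  let g' : F →ₗ[𝕜] G := (LinearMap.ker (π : E →ₗ[𝕜] F)).liftQ g (fun x hx => hg x hx) ∘ₗ
    ((π : E →ₗ[𝕜] F).quotKerEquivOfSurjective hπ).symm.toLinearMap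
  have hg' : ∀ x, g' (π x) = g x := fun x => by
    have := LinearMap.quotKerEquivOfSurjective_symm_apply (f := (π : E →ₗ[𝕜] F)) hπ x
    simp only [coe_coe] at this
    simp only [g', LinearMap.comp_apply, LinearEquiv.coe_coe, this]
    rfl
  have hcont : Continuous g' := by
    rw [(π.isQuotientMap hπ).continuous_iff]
    convert g.continuous using 1
    exact funext hg'
  exact ⟨⟨g', hcont⟩, ext hg'⟩

theorem exists_apply_apply_eq_of_surjective (π : E →L[𝕜] F) (hπ : Function.Surjective π)
    (W : E →L[𝕜] E →L[𝕜] G) (hW₁ : ∀ a b, π a = 0 → W a b = 0)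
    (hW₂ : ∀ a b, π b = 0 → W a b = 0) :
    ∃ D : F →L[𝕜] F →L[𝕜] G, ∀ a b, D (π a) (π b) = W a b := by
  obtain ⟨W₁, hW₁'⟩ := exists_comp_eq_of_surjective π hπ W fun a ha => ext fun b => hW₁ a b ha
  obtain ⟨W₂, hW₂'⟩ := exists_comp_eq_of_surjective π hπ W₁.flip fun b hb => ext fun q => by
    obtain ⟨a, rfl⟩ := hπ q
    simpa [← hW₁'] using hW₂ a b hb
  refine ⟨W₂.flip, fun a b => ?_⟩
  rw [flip_apply, ← comp_apply W₂, hW₂', flip_apply, ← comp_apply W₁, hW₁']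

end ContinuousLinearMap

theorem Filter.exists_subtype_map_eq {X ι : Type*} (l : Filter ι) [l.NeBot] (g : ι → X)
    {P : X → Prop} (hP : ∀ i, P (g i)) :
    ∃ l' : Filter (Subtype P), l'.NeBot ∧ l'.map Subtype.val = l.map g :=
  ⟨l.map fun i => ⟨g i, hP i⟩, inferInstance, by rw [map_map]; rfl⟩

@[simp]
theorem lAct_apply (a : A) (f : A →L[ℂ] ℂ) (b : A) : lAct a f b = f (b * a) := rfl

@[simp]
theorem rAct_apply (f : A →L[ℂ] ℂ) (a b : A) : rAct f a b = f (a * b) := rfl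

def innerDeriv (F : A →L[ℂ] ℂ) : A →L[ℂ] (A →L[ℂ] ℂ) :=
  ContinuousLinearMap.compL ℂ A A ℂ F ∘L
    ((ContinuousLinearMap.mul ℂ A).flip - ContinuousLinearMap.mul ℂ A)

@[simp]
theorem innerDeriv_apply_apply (F : A →L[ℂ] ℂ) (a b : A) :
    innerDeriv F a b = F (b * a) - F (a * b) := by
  simp [innerDeriv]

theorem innerDeriv_apply (F : A →L[ℂ] ℂ) (a : A) : innerDeriv F a = lAct a F - rAct F a := by
  ext b
  simp [lAct, rAct]

theorem isDerivation_innerDeriv (F : A →L[ℂ] ℂ) : IsDerivation (innerDeriv F) := by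
  intro a b
  ext c
  simp only [innerDeriv_apply_apply, add_apply, lAct_apply, rAct_apply, mul_assoc]
  ring

theorem isCyclicDeriv_innerDeriv (F : A →L[ℂ] ℂ) : IsCyclicDeriv (innerDeriv F) := by
  intro a b
  simp only [innerDeriv_apply_apply]
  ring

theorem IsCyclicDeriv.of_apply_apply_eq {R S : Type*} [NonUnitalNormedRing R] [NormedSpace ℂ R]
    [NonUnitalNormedRing S] [NormedSpace ℂ S] {π : R → S} (hπ : Function.Surjective π)
    {D : S →L[ℂ] (S →L[ℂ] ℂ)} {W : R →L[ℂ] (R →L[ℂ] ℂ)}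
    (hDW : ∀ a b, D (π a) (π b) = W a b) (hW : IsCyclicDeriv W) : IsCyclicDeriv D := by
  intro q r
  obtain ⟨a, rfl⟩ := hπ q
  obtain ⟨b, rfl⟩ := hπ r
  rw [hDW, hDW]
  exact hW a b

section Quotient

variable {Q : Type*} [NonUnitalNormedRing Q] [NormedSpace ℂ Q]
  [IsScalarTower ℂ Q Q] [SMulCommClass ℂ Q Q]

theorem IsDerivation.of_apply_apply_eq {π : A → Q} (hmul : ∀ x y : A, π (x * y) = π x * π y)
    (hπ : Function.Surjective π) {D : Q →L[ℂ] (Q →L[ℂ] ℂ)} {W : A →L[ℂ] (A →L[ℂ] ℂ)}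
    (hDW : ∀ a b, D (π a) (π b) = W a b) (hW : IsDerivation W) : IsDerivation D := by
  intro q r
  ext s
  obtain ⟨a, rfl⟩ := hπ q
  obtain ⟨b, rfl⟩ := hπ r
  obtain ⟨c, rfl⟩ := hπ s
  have := congrArg (· c) (hW a b)
  simp only [add_apply, lAct_apply, rAct_apply] at this ⊢
  rw [← hmul, ← hmul, ← hmul, hDW, hDW, hDW, this]

theorem tendsto_innerDeriv_sub_comp (π : A →L[ℂ] Q) (hmul : ∀ x y : A, π (x * y) = π x * π y)
    {F : A →L[ℂ] ℂ} {D : Q →L[ℂ] (Q →L[ℂ] ℂ)} (hDF : ∀ a b, D (π a) (π b) = innerDeriv F a b)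
    {ι : Type*} {l : Filter ι} {h : ι → Q →L[ℂ] ℂ} (a : A)
    (hconv : Tendsto (fun i => innerDeriv (h i) (π a)) l (𝓝 (D (π a)))) :
    Tendsto (fun i => innerDeriv (F - (h i).comp π) a) l (𝓝 0) := by
  have hcomm : ∀ i, (D (π a) - innerDeriv (h i) (π a)).comp π = innerDeriv (F - (h i).comp π) a :=
    fun i => by
      ext b
      simp only [ContinuousLinearMap.sub_comp, sub_apply, ContinuousLinearMap.comp_apply, hDF,
        innerDeriv_apply_apply, hmul]
      ring
  have hlim : Tendsto (fun i => D (π a) - innerDeriv (h i) (π a)) l (𝓝 0) := by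
    simpa only [sub_self] using (tendsto_const_nhds (x := D (π a))).sub hconv
  exact (((ContinuousLinearMap.compL ℂ A Q ℂ).flip π).continuous.tendsto' 0 0 (map_zero _)
    |>.comp hlim).congr hcomm

end Quotient

theorem hasApproxTraceExt_of_quotient_approxCyclicAmenable_general
    {A : Type u} {Q : Type v} [NonUnitalNormedRing A] [NormedSpace ℂ A]
    [IsScalarTower ℂ A A] [SMulCommClass ℂ A A] [CompleteSpace A]
    [NonUnitalNormedRing Q] [NormedSpace ℂ Q]
    [IsScalarTower ℂ Q Q] [SMulCommClass ℂ Q Q] [CompleteSpace Q]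
    (I : Submodule ℂ A)
    (hr : ∀ (a : A), ∀ x ∈ I, x * a ∈ I) (hl : ∀ (a : A), ∀ x ∈ I, a * x ∈ I)
    (π : A →L[ℂ] Q) (hmul : ∀ x y : A, π (x * y) = π x * π y)
    (hsurj : Function.Surjective π) (hker : ∀ a : A, π a = 0 ↔ a ∈ I)
    (hQ : ApproxCyclicAmenable Q) :
    HasApproxTraceExt I hr hl := by
  intro f hf
  obtain ⟨F, hFf, -⟩ := exists_extension_norm_eq I f
  have htrace : ∀ a, ∀ x ∈ I, F (a * x) = F (x * a) := fun a x hx =>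
    (hFf ⟨a * x, hl a x hx⟩).trans ((hf a ⟨x, hx⟩).trans (hFf ⟨x * a, hr a x hx⟩).symm)
  obtain ⟨D, hD⟩ := π.exists_apply_apply_eq_of_surjective hsurj (innerDeriv F)
    (fun a b ha => by simp [htrace b a ((hker a).1 ha)])
    (fun a b hb => by simp [htrace a b ((hker b).1 hb)])
  obtain ⟨ι, l, h, hlne, hconv⟩ := hQ D
    ((isDerivation_innerDeriv F).of_apply_apply_eq hmul hsurj hD)
    ((isCyclicDeriv_innerDeriv F).of_apply_apply_eq hsurj hD)
  have hext : ∀ i, ∀ x : I, (F - (h i).comp π) x = f x := fun i x => by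
    simp [(hker x).2 x.2, hFf]
  -- `ι` lives in universe `v`; reindex the net by a subtype of `A*`, which lives in `u`.
  obtain ⟨l', hl'ne, hmap⟩ := Filter.exists_subtype_map_eq l _
    (P := fun φ : A →L[ℂ] ℂ => ∀ x : I, φ x = f x) hext
  refine ⟨_, l', Subtype.val, hl'ne, fun φ => φ.2, fun a => ?_⟩
  simp_rw [← innerDeriv_apply] at hconv ⊢
  have hlim : Tendsto (fun φ => innerDeriv φ a) (l.map fun i => F - (h i).comp π) (𝓝 0) :=
    tendsto_map'_iff.2 (tendsto_innerDeriv_sub_comp π hmul hD a (hconv (π a)))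
  rw [← hmap] at hlim
  exact tendsto_map'_iff.1 hlim

/-- If the quotient `A/I` of a Banach algebra `A` by a closed two-sided
ideal `I` is approximately cyclic amenable, then `I` has the approximate trace extension
property.  (The quotient is represented by a Banach algebra `Q` together with a surjective
continuous multiplicative linear map `π : A → Q` with kernel `I` and the quotient norm.) -/
theorem hasApproxTraceExt_of_quotient_approxCyclicAmenable
    {A : Type u} {Q : Type v} [NonUnitalNormedRing A] [NormedSpace ℂ A]
    [IsScalarTower ℂ A A] [SMulCommClass ℂ A A] [CompleteSpace A]
    [NonUnitalNormedRing Q] [NormedSpace ℂ Q]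
    [IsScalarTower ℂ Q Q] [SMulCommClass ℂ Q Q] [CompleteSpace Q]
    (I : Submodule ℂ A) (hclosed : IsClosed (I : Set A))
    (hr : ∀ (a : A), ∀ x ∈ I, x * a ∈ I) (hl : ∀ (a : A), ∀ x ∈ I, a * x ∈ I)
    (π : A →L[ℂ] Q) (hmul : ∀ x y : A, π (x * y) = π x * π y)
    (hsurj : Function.Surjective π) (hker : ∀ a : A, π a = 0 ↔ a ∈ I)
    (hnorm : ∀ q : Q, ‖q‖ = sInf (norm '' (π ⁻¹' {q})))
    (hQ : ApproxCyclicAmenable Q) :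
    HasApproxTraceExt I hr hl :=
  hasApproxTraceExt_of_quotient_approxCyclicAmenable_general I hr hl π hmul hsurj hker hQ
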